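/- arXiv:1404.0217 — 6 statements merged into one kernel-verified Lean document; each statement's English description precedes it below -/
import Mathlib

section
/- Let n be a positive integer and let x be a real number with x > 1. Then the lacunary polynomial satisfies the integral representation ℘_n(x^{-2}) = (1/(2√(π log x))) ∫_{-∞}^{∞} exp(−s²/(4 log x)) (1 + x e^{is})^n ds, where the integral is over the real line and e^{is} denotes the complex exponential. -/
/-!
Expand `(1 + x e^{is})^n` binomially and integrate term by term: the Fourier transform of the
Gaussian `exp(-s²/(4a))` at frequency `k` is `2√(πa) exp(-k²a)`. With `a = log x` the `k`-th term
becomes `C(n,k) x^k x^{-k²} = C(n,k) (x⁻²)^{k(k-1)/2}`.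
-/

open Complex Finset MeasureTheory

theorem re_one_div_four_mul_pos {a : ℝ} (ha : 0 < a) : 0 < (1 / (4 * a : ℂ)).re := by
  rw [show (1 / (4 * a : ℂ)) = ((1 / (4 * a) : ℝ) : ℂ) by push_cast; rfl, ofReal_re]
  positivity

theorem integrable_cexp_neg_sq_div_mul_cexp_I_mul {a : ℝ} (ha : 0 < a) (t : ℂ) :
    Integrable fun s : ℝ => cexp (-(s : ℂ) ^ 2 / (4 * a)) * cexp (I * t * s) := by
  refine (integrable_cexp_quadratic (re_one_div_four_mul_pos ha) (I * t) 0).congr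
    (.of_forall fun s => ?_)
  dsimp only
  rw [← Complex.exp_add]
  ring_nf

theorem integral_cexp_neg_sq_div_mul_cexp_I_mul {a : ℝ} (ha : 0 < a) (t : ℂ) :
    ∫ s : ℝ, cexp (-(s : ℂ) ^ 2 / (4 * a)) * cexp (I * t * s) =
      2 * Real.sqrt (Real.pi * a) * cexp (-t ^ 2 * a) := by
  have hconst : ((Real.pi : ℂ) / (1 / (4 * a))) ^ (1 / 2 : ℂ) = 2 * Real.sqrt (Real.pi * a) := by
    rw [show (Real.pi : ℂ) / (1 / (4 * a)) = ((2 * Real.sqrt (Real.pi * a)) ^ 2 : ℝ) by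
        rw [mul_pow, Real.sq_sqrt (by positivity)]; push_cast; field_simp; ring,
      show ((1 : ℂ) / 2) = ((1 / 2 : ℝ) : ℂ) by norm_num, ← ofReal_cpow (by positivity),
      ← Real.sqrt_eq_rpow, Real.sqrt_sq (by positivity)]
    push_cast; rfl
  have hexp : -t ^ 2 / (4 * (1 / (4 * a : ℂ))) = -t ^ 2 * a := by
    have : (a : ℂ) ≠ 0 := by exact_mod_cast ha.ne'
    field_simp
  simp_rw [mul_comm (cexp _) (cexp (I * t * _)),
    show ∀ s : ℝ, -(s : ℂ) ^ 2 / (4 * a) = -(1 / (4 * a)) * s ^ 2 from fun s => by ring]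
  rw [fourierIntegral_gaussian (re_one_div_four_mul_pos ha), hconst, hexp]

theorem integral_cexp_neg_sq_div_mul_one_add_mul_cexp_I_pow {a : ℝ} (ha : 0 < a) (z : ℂ)
    (n : ℕ) :
    ∫ s : ℝ, cexp (-(s : ℂ) ^ 2 / (4 * a)) * (1 + z * cexp (I * s)) ^ n =
      2 * Real.sqrt (Real.pi * a) *
        ∑ k ∈ range (n + 1), n.choose k * z ^ k * cexp (-(k : ℂ) ^ 2 * a) := by
  have hexpand (s : ℝ) : cexp (-(s : ℂ) ^ 2 / (4 * a)) * (1 + z * cexp (I * s)) ^ n =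
      ∑ k ∈ range (n + 1), n.choose k * z ^ k *
        (cexp (-(s : ℂ) ^ 2 / (4 * a)) * cexp (I * k * s)) := by
    rw [add_comm, add_pow, mul_sum]
    refine sum_congr rfl fun k _ => ?_
    rw [mul_pow, ← Complex.exp_nat_mul, one_pow, mul_one]
    ring_nf
  simp_rw [hexpand]
  rw [integral_finsetSum _ fun (k : ℕ) _ =>
      (integrable_cexp_neg_sq_div_mul_cexp_I_mul ha k).const_mul _, mul_sum]
  refine sum_congr rfl fun k _ => ?_
  rw [integral_const_mul, integral_cexp_neg_sq_div_mul_cexp_I_mul ha]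
  ring

theorem ofReal_pow_mul_cexp_neg_sq_mul_log {x : ℝ} (hx : 0 < x) (k : ℕ) :
    (x : ℂ) ^ k * cexp (-(k : ℂ) ^ 2 * Real.log x) =
      ((x : ℂ) ^ (-2 : ℤ)) ^ (k * (k - 1) / 2) := by
  have hx_exp : (x : ℂ) = cexp (Real.log x) := by rw [← ofReal_exp, Real.exp_log hx]
  rw [← Nat.choose_two_right, hx_exp, ← exp_nat_mul, ← exp_int_mul, ← exp_nat_mul, ← exp_add]
  push_cast [Nat.cast_choose_two]
  ring_nf

theorem lacunary_integral_representation_real_general (n : ℕ) (x : ℝ) (hx : 1 < x) :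
    (∑ k ∈ Finset.range (n + 1),
        (n.choose k : ℂ) * ((x : ℂ) ^ (-2 : ℤ)) ^ (k * (k - 1) / 2)) =
      (1 / (2 * Real.sqrt (Real.pi * Real.log x)) : ℂ) *
        ∫ s : ℝ, Complex.exp (-(s : ℂ) ^ 2 / (4 * (Real.log x : ℂ))) *
          (1 + (x : ℂ) * Complex.exp (Complex.I * (s : ℂ))) ^ n := by
  have hlog : 0 < Real.log x := Real.log_pos hx
  have hsqrt : (2 * Real.sqrt (Real.pi * Real.log x) : ℂ) ≠ 0 := by
    exact_mod_cast (by positivity : 0 < 2 * Real.sqrt (Real.pi * Real.log x)).ne'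
  rw [integral_cexp_neg_sq_div_mul_one_add_mul_cexp_I_pow hlog, one_div,
    inv_mul_cancel_left₀ hsqrt]
  refine sum_congr rfl fun k _ => ?_
  rw [mul_assoc, ofReal_pow_mul_cexp_neg_sq_mul_log (by linarith) k]

/-- For a positive integer `n` and a real `x > 1`, the lacunary binomial-type polynomial
`℘_n(x⁻²) = ∑_{k=0}^n C(n,k) (x⁻²)^{k(k-1)/2}` has the integral representation
`℘_n(x⁻²) = (1/(2√(π log x))) ∫_ℝ exp(−s²/(4 log x)) (1 + x e^{is})^n ds`. -/
theorem lacunary_integral_representation_real (n : ℕ) (hn : 1 ≤ n) (x : ℝ) (hx : 1 < x) :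
    (∑ k ∈ Finset.range (n + 1),
        (n.choose k : ℂ) * ((x : ℂ) ^ (-2 : ℤ)) ^ (k * (k - 1) / 2)) =
      (1 / (2 * Real.sqrt (Real.pi * Real.log x)) : ℂ) *
        ∫ s : ℝ, Complex.exp (-(s : ℂ) ^ 2 / (4 * (Real.log x : ℂ))) *
          (1 + (x : ℂ) * Complex.exp (Complex.I * (s : ℂ))) ^ n :=
  lacunary_integral_representation_real_general n x hx
end

section
/- Let n be a positive integer and let x be a nonzero complex number with |x| > 1 and |arg x| ≤ π/2. Then, with log x the principal branch of the logarithm and √ the principal square root, ℘_n(x^{-2}) = (1/(2√(π log x))) ∫_{−∞}^{∞} exp(−s²/(4 log x)) (1 + x e^{is})^n ds, the integral being over the real line and absolutely convergent. -/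
open Complex Finset MeasureTheory

/-!
Expanding `(1 + x e^{is})ⁿ` binomially turns the integral into a finite combination of Fourier
transforms of the Gaussian `exp(-s²/(4L))`, `L = log x`, which is integrable because
`‖x‖ > 1` means `Re L > 0`. Its Fourier transform at frequency `k` is
`2 √(π L) e^{-k² L} = 2 √(π L) x^{-k²}`, and `x^k x^{-k²} = (x^{-2})^{k(k-1)/2}`.
-/

theorem Complex.ofReal_mul_cpow {a : ℝ} (ha : 0 < a) (z w : ℂ) :
    ((a : ℂ) * z) ^ w = (a : ℂ) ^ w * z ^ w := by
  rcases eq_or_ne z 0 with rfl | hz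
  · rcases eq_or_ne w 0 with rfl | hw <;> simp [*]
  have ha' : (a : ℂ) ≠ 0 := ofReal_ne_zero.mpr ha.ne'
  rw [cpow_def_of_ne_zero (mul_ne_zero ha' hz), cpow_def_of_ne_zero ha', cpow_def_of_ne_zero hz,
    log_ofReal_mul ha hz, ofReal_log ha.le, add_mul, exp_add]

theorem Complex.four_mul_cpow_one_div_two (z : ℂ) :
    (4 * z) ^ (1 / 2 : ℂ) = 2 * z ^ (1 / 2 : ℂ) := by
  have h4 : (4 : ℂ) ^ (1 / 2 : ℂ) = 2 := by
    rw [show (4 : ℂ) = 2 ^ 2 by norm_num, one_div]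
    exact pow_cpow_ofNat_inv (by simp [Real.pi_pos]) (by simp; positivity)
  rw [show (4 : ℂ) = ((4 : ℝ) : ℂ) by norm_num, ofReal_mul_cpow (by norm_num)]
  norm_num [h4]

theorem zpow_neg_two_pow_mul_pred_div_two {G₀ : Type*} [GroupWithZero G₀] {x : G₀} (hx : x ≠ 0)
    (k : ℕ) : (x ^ (-2 : ℤ)) ^ (k * (k - 1) / 2) = x ^ k * x ^ (-(k : ℤ) ^ 2) := by
  obtain ⟨m, hm⟩ := (Nat.even_mul_pred_self k).two_dvd
  rw [hm, Nat.mul_div_cancel_left m two_pos, ← zpow_natCast, ← zpow_mul, ← zpow_natCast x k,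
    ← zpow_add₀ hx]
  congr 1
  rcases k with _ | k
  · simp at hm; simp [hm]
  · have hm' : ((k + 1 : ℕ) : ℤ) * k = 2 * m := by exact_mod_cast hm
    push_cast at hm' ⊢
    linear_combination hm'

section GaussianWeight

variable {L : ℂ}

theorem neg_sq_div_four_mul_eq (s : ℂ) : -s ^ 2 / (4 * L) = -(4 * L)⁻¹ * s ^ 2 := by
  ring

theorem re_inv_four_mul_pos (hL : 0 < L.re) : 0 < ((4 : ℂ) * L)⁻¹.re := by
  have h4L : 0 < (4 * L).re := by simp [hL]
  rw [inv_re]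
  exact div_pos h4L (normSq_pos.mpr fun h => by simp [h] at h4L)

theorem integrable_cexp_I_mul_mul_cexp_neg_sq_div (hL : 0 < L.re) (t : ℂ) :
    Integrable fun s : ℝ => cexp (I * t * s) * cexp (-(s : ℂ) ^ 2 / (4 * L)) := by
  refine (integrable_cexp_quadratic (re_inv_four_mul_pos hL) (I * t) 0).congr
    (.of_forall fun s => ?_)
  dsimp only
  rw [← exp_add, neg_sq_div_four_mul_eq]
  ring_nf

theorem integral_cexp_I_mul_mul_cexp_neg_sq_div (hL : 0 < L.re) (t : ℂ) :
    ∫ s : ℝ, cexp (I * t * s) * cexp (-(s : ℂ) ^ 2 / (4 * L)) =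
      2 * (Real.pi * L) ^ (1 / 2 : ℂ) * cexp (-t ^ 2 * L) := by
  simp_rw [neg_sq_div_four_mul_eq]
  rw [fourierIntegral_gaussian (re_inv_four_mul_pos hL), div_inv_eq_mul,
    show (Real.pi : ℂ) * (4 * L) = 4 * (Real.pi * L) by ring, four_mul_cpow_one_div_two]
  congr 2
  field_simp

theorem cexp_neg_sq_div_mul_one_add_mul_cexp_pow (a : ℂ) (n : ℕ) (s : ℝ) :
    cexp (-(s : ℂ) ^ 2 / (4 * L)) * (1 + a * cexp (I * s)) ^ n =
      ∑ k ∈ range (n + 1),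
        (n.choose k * a ^ k) * (cexp (I * k * s) * cexp (-(s : ℂ) ^ 2 / (4 * L))) := by
  rw [add_comm, add_pow, mul_sum]
  refine sum_congr rfl fun k _ => ?_
  rw [mul_pow, ← exp_nat_mul, one_pow, mul_one]
  ring_nf

theorem integrable_cexp_neg_sq_div_mul_one_add_mul_cexp_pow (hL : 0 < L.re) (a : ℂ) (n : ℕ) :
    Integrable fun s : ℝ => cexp (-(s : ℂ) ^ 2 / (4 * L)) * (1 + a * cexp (I * s)) ^ n := by
  simp_rw [cexp_neg_sq_div_mul_one_add_mul_cexp_pow]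
  exact integrable_finsetSum _ fun k _ =>
    (integrable_cexp_I_mul_mul_cexp_neg_sq_div hL k).const_mul _

theorem integral_cexp_neg_sq_div_mul_one_add_mul_cexp_pow (hL : 0 < L.re) (a : ℂ) (n : ℕ) :
    ∫ s : ℝ, cexp (-(s : ℂ) ^ 2 / (4 * L)) * (1 + a * cexp (I * s)) ^ n =
      2 * (Real.pi * L) ^ (1 / 2 : ℂ) *
        ∑ k ∈ range (n + 1), n.choose k * (a ^ k * cexp (-(k : ℂ) ^ 2 * L)) := by
  simp_rw [cexp_neg_sq_div_mul_one_add_mul_cexp_pow]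
  rw [integral_finsetSum _ fun k _ => (integrable_cexp_I_mul_mul_cexp_neg_sq_div hL _).const_mul _,
    mul_sum]
  refine sum_congr rfl fun k _ => ?_
  rw [integral_const_mul, integral_cexp_I_mul_mul_cexp_neg_sq_div hL]
  ring

end GaussianWeight

theorem lacunary_integral_representation_complex_general (n : ℕ) (x : ℂ)
    (hx : 1 < ‖x‖) :
    Integrable (fun s : ℝ =>
        Complex.exp (-(s : ℂ) ^ 2 / (4 * Complex.log x)) *
          (1 + x * Complex.exp (Complex.I * (s : ℂ))) ^ n) ∧
      (∑ k ∈ Finset.range (n + 1),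
          (n.choose k : ℂ) * (x ^ (-2 : ℤ)) ^ (k * (k - 1) / 2)) =
        (1 / (2 * ((Real.pi : ℂ) * Complex.log x) ^ ((1 : ℂ) / 2))) *
          ∫ s : ℝ, Complex.exp (-(s : ℂ) ^ 2 / (4 * Complex.log x)) *
            (1 + x * Complex.exp (Complex.I * (s : ℂ))) ^ n := by
  have hx0 : x ≠ 0 := norm_pos_iff.mp (one_pos.trans hx)
  have hL : 0 < (log x).re := by rw [log_re]; exact Real.log_pos hx
  have hπL : (Real.pi : ℂ) * log x ≠ 0 :=
    mul_ne_zero (ofReal_ne_zero.mpr Real.pi_ne_zero) fun h => by simp [h] at hL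
  refine ⟨integrable_cexp_neg_sq_div_mul_one_add_mul_cexp_pow hL x n, ?_⟩
  rw [integral_cexp_neg_sq_div_mul_one_add_mul_cexp_pow hL, ← mul_assoc, one_div,
    inv_mul_cancel₀ (mul_ne_zero two_ne_zero (cpow_ne_zero_iff.mpr (.inl hπL))), one_mul]
  refine sum_congr rfl fun k _ => ?_
  rw [zpow_neg_two_pow_mul_pred_div_two hx0, ← exp_log hx0, ← exp_nat_mul, ← exp_int_mul,
    exp_log hx0]
  push_cast
  ring

/-- For a positive integer `n` and a nonzero complex `x` with `|x| > 1` and `|arg x| ≤ π/2`,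
the lacunary binomial-type polynomial `℘_n(x⁻²)` has the integral representation
`℘_n(x⁻²) = (1/(2√(π log x))) ∫_ℝ exp(−s²/(4 log x)) (1 + x e^{is})^n ds`,
with the principal branch of the logarithm and the principal square root, the integral
being absolutely convergent. -/
theorem lacunary_integral_representation_complex (n : ℕ) (hn : 1 ≤ n) (x : ℂ) (hx0 : x ≠ 0)
    (hx : 1 < ‖x‖) (harg : |x.arg| ≤ Real.pi / 2) :
    Integrable (fun s : ℝ =>
        Complex.exp (-(s : ℂ) ^ 2 / (4 * Complex.log x)) *
          (1 + x * Complex.exp (Complex.I * (s : ℂ))) ^ n) ∧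
      (∑ k ∈ Finset.range (n + 1),
          (n.choose k : ℂ) * (x ^ (-2 : ℤ)) ^ (k * (k - 1) / 2)) =
        (1 / (2 * ((Real.pi : ℂ) * Complex.log x) ^ ((1 : ℂ) / 2))) *
          ∫ s : ℝ, Complex.exp (-(s : ℂ) ^ 2 / (4 * Complex.log x)) *
            (1 + x * Complex.exp (Complex.I * (s : ℂ))) ^ n :=
  lacunary_integral_representation_complex_general n x hx
end

section
/- Let x be a real number with x > 1 and for each positive integer n let r(n) be the unique positive real solution of t(e^t + x) = 2 n x log x. Then r(n) − log n + log log n converges to log(2 x log x) as n → ∞; equivalently, r(n) = log(2 n x log x/ log n) + o(1) as n → ∞. -/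
/-!
With `c = 2 x log x` the equation reads `r (e^r + x) = c n`. Since `r ≤ log (c n)`, the term `x r`
is negligible against `c n`, so taking logarithms of `r e^r = c n (1 - x r / (c n))` gives
`r + log r = log (c n) + o(1)`. As `r → ∞` and `log r ≤ log log (c n) = o(log n)`, this forces
`r ~ log (c n)`, hence `log r = log log n + o(1)` and `r = log c + log n - log log n + o(1)`.
-/

open Filter Real Topology

lemma Filter.Tendsto.log_sub_log {ι : Type*} {l : Filter ι} {f g : ι → ℝ}
    (h : Tendsto (fun i => f i / g i) l (𝓝 1)) (hg : ∀ᶠ i in l, g i ≠ 0) :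
    Tendsto (fun i => Real.log (f i) - Real.log (g i)) l (𝓝 0) := by
  have hlog := h.log one_ne_zero
  rw [Real.log_one] at hlog
  refine hlog.congr' ?_
  filter_upwards [h.eventually_ne one_ne_zero, hg] with i hfg hgi
  exact Real.log_div (left_ne_zero_of_mul (by simpa [div_eq_mul_inv] using hfg)) hgi

section MulExpAddEq

variable {a t M : ℝ}

lemma le_log_of_mul_exp_add_eq (ha : 0 ≤ a) (ht : 0 < t) (h : t * (exp t + a) = M)
    (hM : exp 1 ≤ M) : t ≤ log M := by
  have hM0 : 0 < M := (exp_pos 1).trans_le hM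
  rcases le_or_gt 1 t with h1 | h1
  · rw [le_log_iff_exp_le hM0]
    nlinarith [exp_pos t]
  · exact h1.le.trans ((le_log_iff_exp_le hM0).mpr hM)

lemma log_le_two_mul_add_log_of_mul_exp_add_eq (ha : 0 ≤ a) (ht : 0 < t)
    (h : t * (exp t + a) = M) : log M ≤ 2 * t + log (1 + a) := by
  have hte : t ≤ exp t := by linarith [add_one_le_exp t]
  have h1e : 1 ≤ exp t := one_le_exp ht.le
  have hM : M ≤ (1 + a) * exp (2 * t) := by
    rw [two_mul, exp_add, ← h]
    nlinarith [mul_le_mul_of_nonneg_left h1e ha]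
  calc log M ≤ log ((1 + a) * exp (2 * t)) := log_le_log (by rw [← h]; positivity) hM
    _ = 2 * t + log (1 + a) := by rw [log_mul (by positivity) (exp_pos _).ne', log_exp]; ring

lemma add_log_sub_log_of_mul_exp_add_eq (ha : 0 ≤ a) (ht : 0 < t) (h : t * (exp t + a) = M) :
    t + log t - log M = log (1 - a * t / M) := by
  have hM : 0 < M := by rw [← h]; positivity
  have hfactor : t * exp t = M * (1 - a * t / M) := by field_simp; linarith
  have hpos : 0 < 1 - a * t / M := by
    have := mul_pos ht (exp_pos t)
    rw [hfactor] at this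
    exact pos_of_mul_pos_right this hM.le
  have hlog := congrArg log hfactor
  rw [log_mul ht.ne' (exp_pos t).ne', log_exp, log_mul hM.ne' hpos.ne'] at hlog
  linarith

end MulExpAddEq

section SaddleEquation

variable {ι : Type*} {l : Filter ι} {a : ℝ} {u N : ι → ℝ}

lemma tendsto_atTop_of_mul_exp_add_eq (ha : 0 ≤ a) (hN : Tendsto N l atTop)
    (hu : ∀ᶠ i in l, 0 < u i ∧ u i * (exp (u i) + a) = N i) : Tendsto u l atTop := by
  have hlog : Tendsto (fun i => (log (N i) - log (1 + a)) / 2) l atTop :=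
    ((tendsto_log_atTop.comp hN).atTop_add tendsto_const_nhds).atTop_div_const two_pos
  refine tendsto_atTop_mono' l ?_ hlog
  filter_upwards [hu] with i ⟨hpos, heq⟩
  linarith [log_le_two_mul_add_log_of_mul_exp_add_eq ha hpos heq]

lemma tendsto_add_log_sub_log_of_mul_exp_add_eq (ha : 0 ≤ a) (hN : Tendsto N l atTop)
    (hu : ∀ᶠ i in l, 0 < u i ∧ u i * (exp (u i) + a) = N i) :
    Tendsto (fun i => u i + log (u i) - log (N i)) l (𝓝 0) := by
  have hsmall : Tendsto (fun i => a * u i / N i) l (𝓝 0) := by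
    have hbound : Tendsto (fun i => a * (log (N i) / N i)) l (𝓝 (a * 0)) :=
      (isLittleO_log_id_atTop.tendsto_div_nhds_zero.comp hN).const_mul a
    rw [mul_zero] at hbound
    refine tendsto_of_tendsto_of_tendsto_of_le_of_le' tendsto_const_nhds hbound ?_ ?_
    · filter_upwards [hu] with i ⟨hpos, heq⟩
      have : 0 < N i := by rw [← heq]; positivity
      positivity
    · filter_upwards [hu, hN.eventually_ge_atTop (exp 1)] with i ⟨hpos, heq⟩ hNi
      have hN0 : 0 < N i := by rw [← heq]; positivity
      rw [mul_div_assoc]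
      exact mul_le_mul_of_nonneg_left
        (div_le_div_of_nonneg_right (le_log_of_mul_exp_add_eq ha hpos heq hNi) hN0.le) ha
  have hlog := (tendsto_const_nhds.sub hsmall).log (by norm_num : (1 : ℝ) - 0 ≠ 0)
  rw [sub_zero, log_one] at hlog
  refine hlog.congr' ?_
  filter_upwards [hu] with i ⟨hpos, heq⟩
  exact (add_log_sub_log_of_mul_exp_add_eq ha hpos heq).symm

lemma tendsto_div_log_of_mul_exp_add_eq (ha : 0 ≤ a) (hN : Tendsto N l atTop)
    (hu : ∀ᶠ i in l, 0 < u i ∧ u i * (exp (u i) + a) = N i) :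
    Tendsto (fun i => u i / log (N i)) l (𝓝 1) := by
  have hlogN : Tendsto (fun i => log (N i)) l atTop := tendsto_log_atTop.comp hN
  have hlogu : Tendsto (fun i => log (u i) / log (N i)) l (𝓝 0) := by
    refine tendsto_of_tendsto_of_tendsto_of_le_of_le' tendsto_const_nhds
      (isLittleO_log_id_atTop.tendsto_div_nhds_zero.comp hlogN) ?_ ?_
    · filter_upwards [(tendsto_atTop_of_mul_exp_add_eq ha hN hu).eventually_ge_atTop 1,
        hlogN.eventually_gt_atTop 0] with i hu1 hNi
      exact div_nonneg (log_nonneg hu1) hNi.le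
    · filter_upwards [hu, hN.eventually_ge_atTop (exp 1), hlogN.eventually_gt_atTop 0]
        with i ⟨hpos, heq⟩ hNi hlogNi
      exact div_le_div_of_nonneg_right
        (log_le_log hpos (le_log_of_mul_exp_add_eq ha hpos heq hNi)) hlogNi.le
  have hsum := (((tendsto_add_log_sub_log_of_mul_exp_add_eq ha hN hu).div_atTop hlogN).sub
    hlogu).add_const 1
  rw [sub_zero, zero_add] at hsum
  refine hsum.congr' ?_
  filter_upwards [hlogN.eventually_gt_atTop 0] with i hlogNi
  field_simp
  ring

theorem tendsto_sub_log_add_log_log_of_mul_exp_add_eq (ha : 0 ≤ a) (hN : Tendsto N l atTop)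
    (hu : ∀ᶠ i in l, 0 < u i ∧ u i * (exp (u i) + a) = N i) :
    Tendsto (fun i => u i - log (N i) + log (log (N i))) l (𝓝 0) := by
  have hlog := (tendsto_div_log_of_mul_exp_add_eq ha hN hu).log_sub_log
    ((tendsto_log_atTop.comp hN).eventually_ne_atTop 0)
  have hdiff := (tendsto_add_log_sub_log_of_mul_exp_add_eq ha hN hu).sub hlog
  rw [sub_zero] at hdiff
  exact hdiff.congr fun i => by ring

end SaddleEquation

/-- For a real `x > 1`, let `r(n)` be the unique positive real solution of
`t(e^t + x) = 2 n x log x`. Then `r(n) − log n + log log n → log(2 x log x)` as `n → ∞`;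
equivalently, `r(n) = log(2 n x log x / log n) + o(1)`. -/
theorem saddle_radius_asymptotics (x : ℝ) (hx : 1 < x) (r : ℕ → ℝ)
    (hr : ∀ n : ℕ, 1 ≤ n → 0 < r n ∧ r n * (Real.exp (r n) + x) = 2 * n * x * Real.log x) :
    Tendsto (fun n : ℕ => r n - Real.log n + Real.log (Real.log n)) atTop
      (nhds (Real.log (2 * x * Real.log x))) := by
  set c := 2 * x * log x
  have hc : 0 < c := by have := log_pos hx; positivity
  have hlogn : Tendsto (fun n : ℕ => log n) atTop atTop :=
    tendsto_log_atTop.comp tendsto_natCast_atTop_atTop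
  have hlog_mul : ∀ᶠ n : ℕ in atTop, log (c * n) = log c + log n := by
    filter_upwards [eventually_ge_atTop 1] with n hn
    exact log_mul hc.ne' (by positivity)
  have hsaddle := tendsto_sub_log_add_log_log_of_mul_exp_add_eq (u := r)
    (by linarith : (0 : ℝ) ≤ x) (tendsto_natCast_atTop_atTop.const_mul_atTop hc) <| by
      filter_upwards [eventually_ge_atTop 1] with n hn
      exact ⟨(hr n hn).1, by rw [(hr n hn).2]; ring⟩
  have hloglog : Tendsto (fun n : ℕ => log (log (c * n)) - log (log n)) atTop (𝓝 0) := by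
    refine Tendsto.log_sub_log ?_ (hlogn.eventually_ne_atTop 0)
    have hratio := ((tendsto_const_nhds (x := log c)).div_atTop hlogn).add_const 1
    rw [zero_add] at hratio
    refine hratio.congr' ?_
    filter_upwards [hlog_mul, hlogn.eventually_gt_atTop 0] with n hn hlogn_pos
    rw [hn]
    field_simp
  have hsum := (hsaddle.sub hloglog).const_add (log c)
  rw [sub_zero, add_zero] at hsum
  refine hsum.congr' ?_
  filter_upwards [hlog_mul] with n hn
  rw [hn]
  ring
end

section
/- Let x be a real number with x > 1, for each positive integer n let r(n) be the unique positive real solution of t(e^t + x) = 2 n x log x, and set λ_0(n) = x e^{−r(n)}. Then (2 n log x / log n) · λ_0(n) → 1 as n → ∞; that is, λ_0(n) is asymptotic to log n/(2 n log x). -/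
/-!
With `φ = mulExpAdd x`, i.e. `φ(t) = t (eᵗ + x)`, strictly increasing on `[0, ∞)`, we have
`r(n) = φ⁻¹(c n)` with `c = 2 x log x`. For `b < 1` one has `φ(b log n) = b log n (nᵇ + x) = o(n)`,
while for `b > 1` already `φ(b log n) ≥ b log n · n`; comparing with `c n` gives `r(n) ∼ log n`.
The equation itself rewrites `λ₀(n) = x e^{-r}` as `r / (2 n log x - r)`, and `r = O(log n) = o(n)`.
-/

open Filter Real Set Topology

noncomputable def mulExpAdd (x t : ℝ) : ℝ := t * (exp t + x)

lemma strictMonoOn_mulExpAdd {x : ℝ} (hx : 0 ≤ x) : StrictMonoOn (mulExpAdd x) (Ici 0) := by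
  intro s hs t _ hst
  have hexp : exp s < exp t := exp_lt_exp.2 hst
  simp only [mulExpAdd]
  nlinarith [exp_pos t, mem_Ici.1 hs]

lemma eventually_mulExpAdd_mul_log_lt {b : ℝ} (hb : b < 1) (x : ℝ) {c : ℝ} (hc : 0 < c) :
    ∀ᶠ y in atTop, mulExpAdd x (b * log y) < c * y := by
  have hrpow : Tendsto (fun y => log y / y ^ (1 - b)) atTop (𝓝 0) :=
    (isLittleO_log_rpow_atTop (by linarith)).tendsto_div_nhds_zero
  have hid : Tendsto (fun y => log y / y) atTop (𝓝 0) :=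
    isLittleO_log_id_atTop.tendsto_div_nhds_zero
  have hsmall : Tendsto (fun y => mulExpAdd x (b * log y) / y) atTop (𝓝 0) := by
    have := (hrpow.const_mul b).add (hid.const_mul (b * x))
    rw [mul_zero, mul_zero, add_zero] at this
    refine this.congr' ?_
    filter_upwards [eventually_gt_atTop 0] with y hy
    have hyb : exp (b * log y) = y ^ b := by rw [rpow_def_of_pos hy, mul_comm]
    rw [mulExpAdd, hyb, rpow_sub hy, rpow_one]
    have : 0 < y ^ b := rpow_pos_of_pos hy b
    field_simp
  filter_upwards [hsmall.eventually_lt_const hc, eventually_gt_atTop 0] with y h hy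
  rwa [div_lt_iff₀ hy] at h

lemma eventually_lt_mulExpAdd_mul_log {b : ℝ} (hb : 1 < b) {x : ℝ} (hx : 0 ≤ x) (c : ℝ) :
    ∀ᶠ y in atTop, c * y < mulExpAdd x (b * log y) := by
  filter_upwards [(tendsto_log_atTop.const_mul_atTop (by linarith : 0 < b)).eventually_gt_atTop c,
    eventually_gt_atTop 1] with y hlog hy
  have hy_le : y ≤ exp (b * log y) := by
    calc y = exp (log y) := (exp_log (by linarith)).symm
      _ ≤ exp (b * log y) := exp_le_exp.2 (by nlinarith [log_pos hy])
  calc c * y < b * log y * y := by nlinarith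
    _ ≤ mulExpAdd x (b * log y) :=
      mul_le_mul_of_nonneg_left (hy_le.trans (le_add_of_nonneg_right hx))
        (mul_nonneg (by linarith) (log_pos hy).le)

theorem tendsto_div_log_of_mulExpAdd_eq {x c : ℝ} (hx : 0 ≤ x) (hc : 0 < c) {r : ℕ → ℝ}
    (hr0 : ∀ᶠ n in atTop, 0 ≤ r n) (hr : ∀ᶠ n in atTop, mulExpAdd x (r n) = c * n) :
    Tendsto (fun n => r n / log n) atTop (𝓝 1) := by
  have hlog : ∀ᶠ n : ℕ in atTop, 0 < log n :=
    (tendsto_log_atTop.comp tendsto_natCast_atTop_atTop).eventually_gt_atTop 0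
  have hmono := strictMonoOn_mulExpAdd hx
  refine tendsto_order.2 ⟨fun b hb => ?_, fun b hb => ?_⟩
  · obtain ⟨b', hbb', hb'⟩ := exists_between (max_lt hb one_pos)
    filter_upwards
      [tendsto_natCast_atTop_atTop.eventually (eventually_mulExpAdd_mul_log_lt hb' x hc), hr0,
        hr, hlog] with n hlt hn0 hn hln
    have hb'0 : 0 ≤ b' * log n := by nlinarith [le_max_right b 0]
    have : b' * log n < r n := (hmono.lt_iff_lt hb'0 hn0).1 (hn ▸ hlt)
    rw [lt_div_iff₀ hln]
    nlinarith [le_max_left b 0]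
  · filter_upwards
      [tendsto_natCast_atTop_atTop.eventually (eventually_lt_mulExpAdd_mul_log hb hx c), hr0,
        hr, hlog] with n hgt hn0 hn hln
    rw [div_lt_iff₀ hln]
    exact (hmono.lt_iff_lt hn0 (mul_nonneg (by linarith) hln.le)).1 (hn ▸ hgt)

lemma mul_mul_exp_neg_eq {x r a : ℝ} (hr : r ≠ 0) (ha : a ≠ 0) (h : mulExpAdd x r = a * x) :
    a * (x * exp (-r)) = r / (1 - r / a) := by
  have hkey : r * exp r = x * (a - r) := by rw [mulExpAdd] at h; linarith
  have hsub : a - r ≠ 0 := by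
    intro h0
    rw [h0, mul_zero] at hkey
    exact mul_ne_zero hr (exp_pos r).ne' hkey
  rw [one_sub_div ha, div_div_eq_mul_div, eq_div_iff hsub, exp_neg]
  field_simp
  linarith

/-- For a real `x > 1`, let `r(n)` be the unique positive real solution of
`t(e^t + x) = 2 n x log x`, and set `λ₀(n) = x e^{−r(n)}`. Then
`(2 n log x / log n) · λ₀(n) → 1` as `n → ∞`; that is, `λ₀(n) ∼ log n/(2 n log x)`. -/
theorem lambda_asymptotics (x : ℝ) (hx : 1 < x) (r : ℕ → ℝ)
    (hr : ∀ n : ℕ, 1 ≤ n → 0 < r n ∧ r n * (Real.exp (r n) + x) = 2 * n * x * Real.log x) :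
    Tendsto (fun n : ℕ => (2 * n * Real.log x / Real.log n) * (x * Real.exp (-(r n)))) atTop
      (nhds 1) := by
  have hlx : 0 < log x := log_pos hx
  have hr' : ∀ᶠ n : ℕ in atTop, 0 < r n ∧ mulExpAdd x (r n) = (2 * n * log x) * x :=
    (eventually_ge_atTop 1).mono fun n hn => ⟨(hr n hn).1, by rw [mulExpAdd, (hr n hn).2]; ring⟩
  have hratio : Tendsto (fun n : ℕ => r n / log n) atTop (𝓝 1) :=
    tendsto_div_log_of_mulExpAdd_eq (x := x) (c := 2 * x * log x) (by linarith) (by positivity)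
      (hr'.mono fun n hn => hn.1.le) (hr'.mono fun n hn => by rw [hn.2]; ring)
  have hlog_div : Tendsto (fun n : ℕ => log n / n) atTop (𝓝 0) :=
    isLittleO_log_id_atTop.tendsto_div_nhds_zero.comp tendsto_natCast_atTop_atTop
  have hlog_pos : ∀ᶠ n : ℕ in atTop, 0 < log n :=
    (tendsto_log_atTop.comp tendsto_natCast_atTop_atTop).eventually_gt_atTop 0
  have hsmall : Tendsto (fun n : ℕ => r n / (2 * n * log x)) atTop (𝓝 0) := by
    have := (hratio.mul hlog_div).div_const (2 * log x)
    rw [one_mul, zero_div] at this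
    refine this.congr' ?_
    filter_upwards [hlog_pos] with n hln
    field_simp
  have hlim := hratio.div (tendsto_const_nhds.sub hsmall) (by norm_num : (1 : ℝ) - 0 ≠ 0)
  rw [sub_zero, div_one] at hlim
  refine hlim.congr' ?_
  filter_upwards [hr', eventually_gt_atTop 0] with n hn hn0
  rw [Pi.div_apply, div_mul_eq_mul_div, mul_mul_exp_neg_eq hn.1.ne' (by positivity) hn.2,
    div_right_comm]
end

section
/- Let x be a real number with x > 1, for each positive integer n let r(n) be the unique positive real solution of t(e^t + x) = 2 n x log x, and set λ_0(n) = x e^{−r(n)} and ω_0(n) = 2 n λ_0(n) log x/(1 + λ_0(n))². Then ω_0(n)/log n → 1 as n → ∞; that is, ω_0(n) is asymptotic to log n. -/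
open Filter Topology Asymptotics Real

/-!
Multiplying the defining equation by `e^{-r}` gives `r (1 + λ₀) = 2 n λ₀ log x`, so
`ω₀(n) = r(n) / (1 + λ₀(n))`. Taking logarithms of the defining equation gives
`r + log r + log (1 + x e^{-r}) = log (2 x log x) + log n`; hence `r → ∞`, so `λ₀ → 0`,
and the two lower-order terms `log r` and `log (1 + λ₀)` are `o(r)`. Therefore
`ω₀ ∼ r ∼ log n`.
-/

lemma log_mul_exp_add {t x : ℝ} (ht : 0 < t) (hx : 0 ≤ x) :
    log (t * (exp t + x)) = t + log t + log (1 + x * exp (-t)) := by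
  have hfactor : exp t + x = exp t * (1 + x * exp (-t)) := by
    rw [mul_add, ← mul_assoc, mul_comm (exp t) x, mul_assoc, ← exp_add]
    simp
  rw [hfactor, log_mul ht.ne' (by positivity), log_mul (exp_pos t).ne' (by positivity), log_exp]
  ring

lemma mul_mul_exp_neg_div_one_add_sq {t x y : ℝ} (hx : 0 ≤ x) (h : t * (exp t + x) = y * x) :
    y * (x * exp (-t)) / (1 + x * exp (-t)) ^ 2 = t * (1 + x * exp (-t))⁻¹ := by
  have hpos : 0 < 1 + x * exp (-t) := by positivity
  have hid : y * (x * exp (-t)) = t * (1 + x * exp (-t)) := by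
    calc y * (x * exp (-t)) = t * (exp t + x) * exp (-t) := by rw [h]; ring
      _ = t * (1 + x * exp (-t)) := by rw [exp_neg]; field_simp
  rw [hid, sq, ← div_div, mul_div_cancel_right₀ _ hpos.ne', div_eq_mul_inv]

section
variable {α : Type*} {l : Filter α} {r c : α → ℝ}

lemma tendsto_mul_exp_neg_nhds_zero (hr : Tendsto r l atTop) (x : ℝ) :
    Tendsto (fun a => x * exp (-r a)) l (𝓝 0) := by
  simpa using (tendsto_exp_neg_atTop_nhds_zero.comp hr).const_mul x

lemma tendsto_atTop_of_mul_exp_add_eq_s14 {x : ℝ} (hx : 0 ≤ x) (hr : ∀ᶠ a in l, 0 < r a)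
    (heq : ∀ᶠ a in l, r a * (exp (r a) + x) = c a) (hc : Tendsto c l atTop) :
    Tendsto r l atTop := by
  have hlower : ∀ᶠ a in l, (log (c a) - log (1 + x)) / 2 ≤ r a := by
    filter_upwards [hr, heq] with a hra hca
    have hlog_r : log (r a) ≤ r a := (log_le_sub_one_of_pos hra).trans (by linarith)
    have hlog_one_add : log (1 + x * exp (-r a)) ≤ log (1 + x) := by
      gcongr
      exact mul_le_of_le_one_right hx (exp_le_one_iff.mpr (by linarith))
    have := log_mul_exp_add hra hx
    rw [hca] at this
    linarith
  refine tendsto_atTop_mono' l hlower ?_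
  exact (tendsto_atTop_add_const_right l (-log (1 + x)) (tendsto_log_atTop.comp hc)).atTop_div_const
    two_pos

lemma isEquivalent_log_of_mul_exp_add_eq {x : ℝ} (hx : 0 ≤ x) (hr : ∀ᶠ a in l, 0 < r a)
    (heq : ∀ᶠ a in l, r a * (exp (r a) + x) = c a) (hc : Tendsto c l atTop) :
    r ~[l] fun a => log (c a) := by
  have hr_top := tendsto_atTop_of_mul_exp_add_eq_s14 hx hr heq hc
  have hlog_r : (fun a => log (r a)) =o[l] r :=
    isLittleO_log_id_atTop.comp_tendsto hr_top
  have hlog_one_add : (fun a => log (1 + x * exp (-r a))) =o[l] r := by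
    refine IsLittleO.trans (g := fun _ => (1 : ℝ)) ?_ ?_
    · rw [isLittleO_one_iff]
      simpa using (tendsto_const_nhds.add (tendsto_mul_exp_neg_nhds_zero hr_top x)).log
        (by norm_num : (1 : ℝ) + 0 ≠ 0)
    · exact (isLittleO_one_left_iff ℝ).mpr (tendsto_norm_atTop_atTop.comp hr_top)
  refine (IsEquivalent.refl.add_isLittleO (hlog_r.add hlog_one_add)).symm.congr_right ?_
  filter_upwards [hr, heq] with a hra hca
  rw [← hca, log_mul_exp_add hra hx]
  simp only [Pi.add_apply]
  ring

lemma isEquivalent_log_const_mul {K : ℝ} (hK : 0 < K) (hc : Tendsto c l atTop) :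
    (fun a => log (K * c a)) ~[l] fun a => log (c a) := by
  have hconst : (fun _ => log K) =o[l] fun a => log (c a) :=
    isLittleO_const_log_atTop.comp_tendsto hc
  refine (IsEquivalent.refl.add_isLittleO hconst).congr_left ?_
  filter_upwards [hc.eventually_gt_atTop 0] with a hca
  rw [Pi.add_apply, log_mul hK.ne' hca.ne', add_comm]

end

/-- For a real `x > 1`, let `r(n)` be the unique positive real solution of
`t(e^t + x) = 2 n x log x`, and set `λ₀(n) = x e^{−r(n)}`,
`ω₀(n) = 2 n λ₀(n) log x/(1 + λ₀(n))²`. Then `ω₀(n)/log n → 1` as `n → ∞`;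
that is, `ω₀(n) ∼ log n`. -/
theorem omega_asymptotics (x : ℝ) (hx : 1 < x) (r : ℕ → ℝ)
    (hr : ∀ n : ℕ, 1 ≤ n → 0 < r n ∧ r n * (Real.exp (r n) + x) = 2 * n * x * Real.log x) :
    Tendsto (fun n : ℕ =>
        (2 * n * (x * Real.exp (-(r n))) * Real.log x / (1 + x * Real.exp (-(r n))) ^ 2) /
          Real.log n) atTop (nhds 1) := by
  have hx0 : 0 ≤ x := by linarith
  have hK : 0 < 2 * x * log x := by have := log_pos hx; positivity
  have hn : Tendsto (fun n : ℕ => (n : ℝ)) atTop atTop := tendsto_natCast_atTop_atTop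
  have heq : ∀ᶠ n : ℕ in atTop, r n * (exp (r n) + x) = 2 * x * log x * n := by
    filter_upwards [eventually_ge_atTop 1] with n hn
    rw [(hr n hn).2]; ring
  have hr_pos : ∀ᶠ n : ℕ in atTop, 0 < r n := by
    filter_upwards [eventually_ge_atTop 1] with n hn using (hr n hn).1
  have hr_top := tendsto_atTop_of_mul_exp_add_eq_s14 hx0 hr_pos heq (hn.const_mul_atTop hK)
  have hr_log : r ~[atTop] fun n => log n :=
    (isEquivalent_log_of_mul_exp_add_eq hx0 hr_pos heq (hn.const_mul_atTop hK)).trans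
      (isEquivalent_log_const_mul hK hn)
  have hinv : (fun n => (1 + x * exp (-r n))⁻¹) ~[atTop] fun _ => (1 : ℝ) :=
    (isEquivalent_const_iff_tendsto one_ne_zero).mpr <| by
      simpa using ((tendsto_mul_exp_neg_nhds_zero hr_top x).const_add 1).inv₀ (by simp)
  have homega : (fun n : ℕ => 2 * n * (x * exp (-r n)) * log x / (1 + x * exp (-r n)) ^ 2)
      ~[atTop] fun n => log n := by
    refine ((hr_log.mul hinv).congr_right (.of_forall fun _ => mul_one _)).congr_left ?_
    filter_upwards [heq] with n hn
    rw [mul_right_comm _ (x * exp _), mul_mul_exp_neg_div_one_add_sq hx0 (by rw [hn]; ring)]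
    rfl
  exact (isEquivalent_iff_tendsto_one
    ((tendsto_log_atTop.comp hn).eventually_ne_atTop 0)).mp homega
end

section
/- Let x be a real number with x > 1 and for each positive integer n let r(n) be the unique positive real solution of t(e^t + x) = 2 n x log x. Then n·log(1 + x e^{−r(n)}) − r(n)/(2 log x) → 0 as n → ∞. Consequently, with ψ(s) = s²/(4n log x) − log(1 + x e^{is}) the phase function of the integral representation of ℘_n(x^{-2}), the exponent at the saddle point i r(n) satisfies −n ψ(i r(n)) = (r(n)² + 2 r(n))/(4 log x) + o(1) as n → ∞, which shows that the leading term of the steepest-descent expansion agrees with the asymptotic formula of Gawronski and Neuschel. -/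
open Filter

/-! With `u = x e^{-r}`, the saddle-point equation reads `2 n log x = r (1 + u) / u`, so
`n log(1 + u) - r / (2 log x) = r / (2 u log x) · ((1 + u) log(1 + u) - u)`.
The elementary bounds `u ≤ (1 + u) log(1 + u) ≤ u (1 + u)` squeeze this between `0` and
`x r e^{-r} / (2 log x)`, which tends to `0` because `r(n) → ∞`. -/

open Real

lemma one_add_mul_log_one_add_mem_Icc {u : ℝ} (hu : 0 ≤ u) :
    (1 + u) * log (1 + u) ∈ Set.Icc u (u * (1 + u)) := by
  have hpos : 0 < 1 + u := by linarith
  constructor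
  · have h := mul_le_mul_of_nonneg_left (one_sub_inv_le_log_of_pos hpos) hpos.le
    rwa [mul_sub, mul_one, mul_inv_cancel₀ hpos.ne', add_sub_cancel_left] at h
  · rw [mul_comm u]
    exact mul_le_mul_of_nonneg_left (by linarith [log_le_sub_one_of_pos hpos]) hpos.le

lemma mul_log_one_add_mul_exp_neg_sub_mem_Icc {x c t n : ℝ} (hx : 0 < x) (hc : 0 < c)
    (ht : 0 ≤ t) (h : t * (exp t + x) = 2 * n * x * c) :
    n * log (1 + x * exp (-t)) - t / (2 * c) ∈ Set.Icc 0 (x / (2 * c) * (t * exp (-t))) := by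
  set u := x * exp (-t) with hu_def
  have hu : 0 < u := by positivity
  have hexp : exp t = x / u := by rw [hu_def, exp_neg]; field_simp
  have hn : n = t * (1 + u) / (2 * c * u) := by
    rw [hexp] at h
    field_simp at h ⊢
    linarith
  have key : n * log (1 + u) - t / (2 * c) = t / (2 * c * u) * ((1 + u) * log (1 + u) - u) := by
    rw [hn]; field_simp
  obtain ⟨hlow, hup⟩ := one_add_mul_log_one_add_mem_Icc hu.le
  rw [key]
  constructor
  · exact mul_nonneg (by positivity) (sub_nonneg.2 hlow)
  · calc t / (2 * c * u) * ((1 + u) * log (1 + u) - u)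
        ≤ t / (2 * c * u) * (u * u) := mul_le_mul_of_nonneg_left (by linarith) (by positivity)
      _ = x / (2 * c) * (t * exp (-t)) := by rw [hu_def]; field_simp

lemma tendsto_atTop_of_tendsto_mul_exp_add {ι : Type*} {l : Filter ι} {x : ℝ} (hx : 0 ≤ x)
    {r : ι → ℝ} (hr : ∀ᶠ i in l, 0 ≤ r i)
    (h : Tendsto (fun i => r i * (exp (r i) + x)) l atTop) : Tendsto r l atTop := by
  refine tendsto_atTop.2 fun b => ?_
  set B := max b 0
  filter_upwards [hr, h.eventually_gt_atTop (B * (exp B + x))] with i hri hgt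
  by_contra! hlt
  have hle : r i ≤ B := hlt.le.trans (le_max_left _ _)
  have : r i * (exp (r i) + x) ≤ B * (exp B + x) :=
    mul_le_mul hle (by gcongr) (by positivity) (le_max_right _ _)
  linarith

/-- For a real `x > 1`, let `r(n)` be the unique positive real solution of
`t(e^t + x) = 2 n x log x`. Then `n·log(1 + x e^{−r(n)}) − r(n)/(2 log x) → 0` as `n → ∞`.
Consequently the exponent at the saddle point `i r(n)`, namely
`−n ψ(i r(n)) = r(n)²/(4 log x) + n log(1 + x e^{−r(n)})`, satisfies
`−n ψ(i r(n)) = (r(n)² + 2 r(n))/(4 log x) + o(1)` as `n → ∞`. -/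
theorem exponent_asymptotics (x : ℝ) (hx : 1 < x) (r : ℕ → ℝ)
    (hr : ∀ n : ℕ, 1 ≤ n → 0 < r n ∧ r n * (Real.exp (r n) + x) = 2 * n * x * Real.log x) :
    Tendsto (fun n : ℕ =>
        n * Real.log (1 + x * Real.exp (-(r n))) - r n / (2 * Real.log x)) atTop (nhds 0) ∧
    Tendsto (fun n : ℕ =>
        ((r n) ^ 2 / (4 * Real.log x) + n * Real.log (1 + x * Real.exp (-(r n)))) -
          ((r n) ^ 2 + 2 * r n) / (4 * Real.log x)) atTop (nhds 0) := by
  have hlog : 0 < log x := log_pos hx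
  have hx0 : 0 < x := one_pos.trans hx
  have hone_le := eventually_ge_atTop 1
  have hr_top : Tendsto r atTop atTop := by
    refine tendsto_atTop_of_tendsto_mul_exp_add hx0.le
      (hone_le.mono fun n hn => (hr n hn).1.le) ?_
    refine (tendsto_natCast_atTop_atTop.const_mul_atTop (by positivity : 0 < 2 * x * log x)).congr'
      (hone_le.mono fun n hn => ?_)
    dsimp only; rw [(hr n hn).2]; ring
  have hdecay : Tendsto (fun n => x / (2 * log x) * (r n * exp (-r n))) atTop (nhds 0) := by
    simpa using ((tendsto_pow_mul_exp_neg_atTop_nhds_zero 1).comp hr_top).const_mul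
      (x / (2 * log x))
  have hbounds := hone_le.mono fun n hn =>
    mul_log_one_add_mul_exp_neg_sub_mem_Icc hx0 hlog (hr n hn).1.le (hr n hn).2
  have hfirst := tendsto_of_tendsto_of_tendsto_of_le_of_le' tendsto_const_nhds hdecay
    (hbounds.mono fun _ h => h.1) (hbounds.mono fun _ h => h.2)
  exact ⟨hfirst, hfirst.congr fun n => by field_simp; ring⟩
end
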